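/- Let G be a connected finite simple graph with distinct vertices u₁, u₂, v₁, v₂ such that u₁u₂ and v₁v₂ are edges but u₁v₂ and v₁u₂ are not. Let 0 ≤ α < 1 and let x be a positive unit eigenvector of A_α(G) for the largest eigenvalue ρ_α(G). If x_{u₁} ≥ x_{v₁}, x_{v₂} ≥ x_{u₂}, then for G' = G − {u₁u₂, v₁v₂} + {u₁v₂, v₁u₂}, one has ρ_α(G') ≥ ρ_α(G). -/

import Mathlib

/-!
The switch `u₁u₂, v₁v₂ ↦ u₁v₂, v₁u₂` adds to the adjacency matrix a signed matrix `S` whose rows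
sum to zero, so all degrees are kept and `A_α(G') = A_α(G) + (1 - α) S`. As
`xᵀ S x = 2 (x u₁ - x v₁) (x v₂ - x u₂) ≥ 0`, the unit eigenvector `x` of `ρ_α(G)` satisfies
`xᵀ A_α(G') x ≥ ρ_α(G)`, and the Rayleigh bound for the symmetric matrix `A_α(G')` gives
`xᵀ A_α(G') x ≤ ρ_α(G')`.
-/

open Matrix

open scoped MatrixOrder in
/-- The spectrum of `M` lies below `r`, so `M ≤ r • 1` in the Loewner order. -/
theorem Matrix.IsHermitian.dotProduct_mulVec_le_of_mem_upperBounds {n : Type*} [Fintype n]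
    [DecidableEq n] {M : Matrix n n ℝ} (hM : M.IsHermitian) {r : ℝ}
    (hr : r ∈ upperBounds {μ : ℝ | ∃ y : n → ℝ, y ≠ 0 ∧ M *ᵥ y = μ • y}) (x : n → ℝ) :
    x ⬝ᵥ M *ᵥ x ≤ r * (x ⬝ᵥ x) := by
  have hle : M ≤ algebraMap ℝ _ r := by
    refine le_algebraMap_of_spectrum_le (fun μ hμ => hr ?_) hM.isSelfAdjoint
    obtain ⟨i, rfl⟩ := hM.spectrum_real_eq_range_eigenvalues ▸ hμ
    refine ⟨_, fun h => hM.eigenvectorBasis.orthonormal.ne_zero i ?_, hM.mulVec_eigenvectorBasis i⟩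
    exact WithLp.ofLp_injective 2 h
  simpa [sub_mulVec, Algebra.algebraMap_eq_smul_one, smul_mulVec, dotProduct_sub] using
    (Matrix.le_iff.mp hle).dotProduct_mulVec_nonneg x

lemma ite_switch_eq_ite_add {α R : Type*} [Ring R] [DecidableEq α] {E : Set α}
    [DecidablePred (· ∈ E)] {e₁ e₂ f₁ f₂ : α} (he₁ : e₁ ∈ E) (he₂ : e₂ ∈ E) (hf₁ : f₁ ∉ E)
    (hf₂ : f₂ ∉ E) (he : e₁ ≠ e₂) (hf : f₁ ≠ f₂) (z : α) :
    (if (z ∈ E ∧ z ≠ e₁ ∧ z ≠ e₂) ∨ z = f₁ ∨ z = f₂ then (1 : R) else 0)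
      = (if z ∈ E then 1 else 0) + ((if z = f₁ then 1 else 0) + (if z = f₂ then 1 else 0)
          - (if z = e₁ then 1 else 0) - (if z = e₂ then 1 else 0)) := by
  have hef₁₁ : e₁ ≠ f₁ := ne_of_mem_of_not_mem he₁ hf₁
  have hef₁₂ : e₁ ≠ f₂ := ne_of_mem_of_not_mem he₁ hf₂
  have hef₂₁ : e₂ ≠ f₁ := ne_of_mem_of_not_mem he₂ hf₁
  have hef₂₂ : e₂ ≠ f₂ := ne_of_mem_of_not_mem he₂ hf₂
  by_cases hz₁ : z = e₁
  · subst hz₁; simp [he₁, he, hef₁₁, hef₁₂]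
  by_cases hz₂ : z = e₂
  · subst hz₂; simp [he₂, he.symm, hef₂₁, hef₂₂]
  by_cases hz₃ : z = f₁
  · subst hz₃; simp [hf₁, hf, hef₁₁.symm, hef₂₁.symm]
  by_cases hz₄ : z = f₂
  · subst hz₄; simp [hf₂, hf.symm, hef₁₂.symm, hef₂₂.symm]
  simp [hz₁, hz₂, hz₃, hz₄]

namespace SimpleGraph

variable {V R : Type*}

lemma degree_eq_of_adjMatrix_eq_add [Fintype V] [Ring R] [CharZero R] {G G' : SimpleGraph V}
    [DecidableRel G.Adj] [DecidableRel G'.Adj] {S : Matrix V V R}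
    (h : G'.adjMatrix R = G.adjMatrix R + S) (hS : S *ᵥ 1 = 0) (v : V) :
    G'.degree v = G.degree v := by
  have hrow := congrFun (congrArg (· *ᵥ (1 : V → R)) h) v
  simp only [add_mulVec, hS, add_zero] at hrow
  exact_mod_cast (by simpa using hrow : (G'.degree v : R) = G.degree v)

variable [DecidableEq V]

def edgeMatrix (R : Type*) [Semiring R] (c d : V) : Matrix V V R :=
  single c d 1 + single d c 1

def switchMatrix (R : Type*) [Ring R] (u₁ u₂ v₁ v₂ : V) : Matrix V V R :=
  edgeMatrix R u₁ v₂ + edgeMatrix R v₁ u₂ - edgeMatrix R u₁ u₂ - edgeMatrix R v₁ v₂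

lemma edgeMatrix_apply [Semiring R] {c d : V} (hcd : c ≠ d) (a b : V) :
    edgeMatrix R c d a b = if s(a, b) = s(c, d) then 1 else 0 := by
  simp only [edgeMatrix, Matrix.add_apply, single_apply, Sym2.eq_iff]
  by_cases h₁ : c = a ∧ d = b
  · obtain ⟨rfl, rfl⟩ := h₁
    simp [hcd]
  · by_cases h₂ : d = a ∧ c = b
    · obtain ⟨rfl, rfl⟩ := h₂
      simp [hcd.symm]
    · grind

lemma adjMatrix_eq_add_switchMatrix [Ring R] {G G' : SimpleGraph V} [DecidableRel G.Adj]
    [DecidableRel G'.Adj] {u₁ u₂ v₁ v₂ : V} (hd : [u₁, u₂, v₁, v₂].Nodup)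
    (h12 : G.Adj u₁ u₂) (h34 : G.Adj v₁ v₂) (h14 : ¬ G.Adj u₁ v₂) (h32 : ¬ G.Adj v₁ u₂)
    (hG' : ∀ a b : V, G'.Adj a b ↔
        ((G.Adj a b ∧ s(a, b) ≠ s(u₁, u₂) ∧ s(a, b) ≠ s(v₁, v₂))
          ∨ s(a, b) = s(u₁, v₂) ∨ s(a, b) = s(v₁, u₂))) :
    G'.adjMatrix R = G.adjMatrix R + switchMatrix R u₁ u₂ v₁ v₂ := by
  simp only [List.nodup_cons, List.mem_cons, List.not_mem_nil, or_false, not_or] at hd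
  obtain ⟨⟨h₁₂, h₁₃, h₁₄⟩, ⟨h₂₃, -⟩, h₃₄, -⟩ := hd
  ext a b
  have key := ite_switch_eq_ite_add (R := R) (G.mem_edgeSet.2 h12) (G.mem_edgeSet.2 h34)
    (mt G.mem_edgeSet.1 h14) (mt G.mem_edgeSet.1 h32) (by simp [h₁₃, h₁₄]) (by simp [h₁₃, h₁₂])
    s(a, b)
  simp only [mem_edgeSet, ← hG'] at key
  simp only [Matrix.add_apply, adjMatrix_apply, switchMatrix, Matrix.sub_apply,
    edgeMatrix_apply h₁₄, edgeMatrix_apply (Ne.symm h₂₃), edgeMatrix_apply h₁₂,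
    edgeMatrix_apply h₃₄]
  exact key

variable [Fintype V]

lemma edgeMatrix_mulVec [Semiring R] (c d : V) (x : V → R) :
    edgeMatrix R c d *ᵥ x = Pi.single c (x d) + Pi.single d (x c) := by
  simp only [edgeMatrix, add_mulVec, single_mulVec, one_mul]
  rfl

lemma dotProduct_edgeMatrix_mulVec [CommSemiring R] (c d : V) (x : V → R) :
    x ⬝ᵥ edgeMatrix R c d *ᵥ x = 2 * x c * x d := by
  rw [edgeMatrix_mulVec, dotProduct_add, dotProduct_single, dotProduct_single]
  ring

lemma switchMatrix_mulVec_one [Ring R] (u₁ u₂ v₁ v₂ : V) :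
    switchMatrix R u₁ u₂ v₁ v₂ *ᵥ 1 = 0 := by
  simp only [switchMatrix, sub_mulVec, add_mulVec, edgeMatrix_mulVec, Pi.one_apply]
  abel

lemma dotProduct_switchMatrix_mulVec [CommRing R] (u₁ u₂ v₁ v₂ : V) (x : V → R) :
    x ⬝ᵥ switchMatrix R u₁ u₂ v₁ v₂ *ᵥ x = 2 * (x u₁ - x v₁) * (x v₂ - x u₂) := by
  simp only [switchMatrix, sub_mulVec, add_mulVec, dotProduct_add, dotProduct_sub,
    dotProduct_edgeMatrix_mulVec]
  ring

/-- Nikiforov's `A_α(G)`. -/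
noncomputable def alphaAdjMatrix (α : ℝ) (G : SimpleGraph V) [DecidableRel G.Adj] :
    Matrix V V ℝ :=
  α • diagonal (fun v => (G.degree v : ℝ)) + (1 - α) • G.adjMatrix ℝ

lemma isHermitian_alphaAdjMatrix (α : ℝ) (G : SimpleGraph V) [DecidableRel G.Adj] :
    (alphaAdjMatrix α G).IsHermitian :=
  ((isHermitian_diagonal _).smul (IsSelfAdjoint.all α)).add
    ((isHermitian_adjMatrix ℝ G).smul (IsSelfAdjoint.all (1 - α)))

lemma alphaAdjMatrix_eq_add {G G' : SimpleGraph V} [DecidableRel G.Adj] [DecidableRel G'.Adj]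
    {S : Matrix V V ℝ} (h : G'.adjMatrix ℝ = G.adjMatrix ℝ + S) (hS : S *ᵥ 1 = 0) (α : ℝ) :
    alphaAdjMatrix α G' = alphaAdjMatrix α G + (1 - α) • S := by
  simp only [alphaAdjMatrix, degree_eq_of_adjMatrix_eq_add h hS, h, smul_add]
  abel

end SimpleGraph

theorem stmt_13_general {V : Type*} [Fintype V] [DecidableEq V] (G G' : SimpleGraph V)
    [DecidableRel G.Adj] [DecidableRel G'.Adj]
    (u₁ u₂ v₁ v₂ : V)
    (hd : [u₁, u₂, v₁, v₂].Nodup)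
    (h12 : G.Adj u₁ u₂) (h34 : G.Adj v₁ v₂)
    (h14 : ¬ G.Adj u₁ v₂) (h32 : ¬ G.Adj v₁ u₂)
    (hG' : ∀ a b : V, G'.Adj a b ↔
        ((G.Adj a b ∧ s(a, b) ≠ s(u₁, u₂) ∧ s(a, b) ≠ s(v₁, v₂))
          ∨ s(a, b) = s(u₁, v₂) ∨ s(a, b) = s(v₁, u₂)))
    (α : ℝ) (hα1 : α < 1)
    (ρ ρ' : ℝ) (x : V → ℝ) (hunit : ∑ u, x u ^ 2 = 1)
    (heig : (α • Matrix.diagonal (fun v => (G.degree v : ℝ)) + (1 - α) • G.adjMatrix ℝ) *ᵥ x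
      = ρ • x)
    (hρ' : IsGreatest {lam : ℝ | ∃ y : V → ℝ, y ≠ 0 ∧
        (α • Matrix.diagonal (fun v => (G'.degree v : ℝ)) + (1 - α) • G'.adjMatrix ℝ) *ᵥ y
          = lam • y} ρ')
    (hx1 : x v₁ ≤ x u₁) (hx2 : x u₂ ≤ x v₂) :
    ρ ≤ ρ' := by
  set S := SimpleGraph.switchMatrix ℝ u₁ u₂ v₁ v₂
  have hA : G'.alphaAdjMatrix α = G.alphaAdjMatrix α + (1 - α) • S :=
    SimpleGraph.alphaAdjMatrix_eq_add
      (SimpleGraph.adjMatrix_eq_add_switchMatrix hd h12 h34 h14 h32 hG')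
      (SimpleGraph.switchMatrix_mulVec_one u₁ u₂ v₁ v₂) α
  have hxx : x ⬝ᵥ x = 1 := by simpa [dotProduct, sq] using hunit
  have hρ : x ⬝ᵥ G.alphaAdjMatrix α *ᵥ x = ρ := by
    rw [SimpleGraph.alphaAdjMatrix, heig, dotProduct_smul, hxx, smul_eq_mul, mul_one]
  have hS : 0 ≤ x ⬝ᵥ S *ᵥ x := by
    rw [SimpleGraph.dotProduct_switchMatrix_mulVec]
    have := mul_nonneg (sub_nonneg.2 hx1) (sub_nonneg.2 hx2)
    linarith
  calc ρ ≤ ρ + (1 - α) * (x ⬝ᵥ S *ᵥ x) :=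
        le_add_of_nonneg_right (mul_nonneg (sub_nonneg.2 hα1.le) hS)
    _ = x ⬝ᵥ G'.alphaAdjMatrix α *ᵥ x := by
      rw [hA, add_mulVec, smul_mulVec, dotProduct_add, dotProduct_smul, hρ, smul_eq_mul]
    _ ≤ ρ' := by
      simpa [hxx] using (SimpleGraph.isHermitian_alphaAdjMatrix α G')
        |>.dotProduct_mulVec_le_of_mem_upperBounds hρ'.2 x

theorem stmt_13 {V : Type*} [Fintype V] [DecidableEq V] (G G' : SimpleGraph V)
    [DecidableRel G.Adj] [DecidableRel G'.Adj] (hconn : G.Connected)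
    (u₁ u₂ v₁ v₂ : V)
    (hd : [u₁, u₂, v₁, v₂].Nodup)
    (h12 : G.Adj u₁ u₂) (h34 : G.Adj v₁ v₂)
    (h14 : ¬ G.Adj u₁ v₂) (h32 : ¬ G.Adj v₁ u₂)
    (hG' : ∀ a b : V, G'.Adj a b ↔
        ((G.Adj a b ∧ s(a, b) ≠ s(u₁, u₂) ∧ s(a, b) ≠ s(v₁, v₂))
          ∨ s(a, b) = s(u₁, v₂) ∨ s(a, b) = s(v₁, u₂)))
    (α : ℝ) (hα0 : 0 ≤ α) (hα1 : α < 1)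
    (ρ ρ' : ℝ) (x : V → ℝ) (hpos : ∀ u, 0 < x u) (hunit : ∑ u, x u ^ 2 = 1)
    (heig : (α • Matrix.diagonal (fun v => (G.degree v : ℝ)) + (1 - α) • G.adjMatrix ℝ) *ᵥ x
      = ρ • x)
    (hρ : IsGreatest {lam : ℝ | ∃ y : V → ℝ, y ≠ 0 ∧
        (α • Matrix.diagonal (fun v => (G.degree v : ℝ)) + (1 - α) • G.adjMatrix ℝ) *ᵥ y
          = lam • y} ρ)
    (hρ' : IsGreatest {lam : ℝ | ∃ y : V → ℝ, y ≠ 0 ∧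
        (α • Matrix.diagonal (fun v => (G'.degree v : ℝ)) + (1 - α) • G'.adjMatrix ℝ) *ᵥ y
          = lam • y} ρ')
    (hx1 : x v₁ ≤ x u₁) (hx2 : x u₂ ≤ x v₂) :
    ρ ≤ ρ' :=
  stmt_13_general G G' u₁ u₂ v₁ v₂ hd h12 h34 h14 h32 hG' α hα1 ρ ρ' x hunit heig hρ' hx1 hx2
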